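/- Cantor's bijection f maps the set Q of quadratic irrational numbers of [0,1] bijectively onto Q × Q; that is, the restriction of f to Q is a one-to-one mapping from Q onto Q². -/

import Mathlib

/-!
Writing `x = [a₀, a₁, …]`, the theorem of Euler and Lagrange says that `x` is a quadratic
irrational exactly when `(aₙ)` is eventually periodic. Hence `Q` is the image of the eventually
periodic sequences under `cfVal`, and on it `f` becomes the splitting of a sequence into its even-
and odd-indexed parts, which is a bijection from eventually periodic sequences onto pairs of them.

Euler's direction: a purely periodic expansion `t = [b₀, …, b_m, t]` is a Möbius transform of
itself with integer coefficients, and `x` is a Möbius transform of its tails. Lagrange's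
direction: if `A x² + B x + C = 0`, substituting `x = (p_{n+1} + t p_n) / (q_{n+1} + t q_n)`
gives a quadratic equation for the tail `t = [a_{n+1}, …]` whose coefficients stay bounded,
because `|x - p_n / q_n| < 1 / (q_n q_{n+1})` and the discriminant is invariant. So only finitely
many tails occur, two coincide, and the expansion is eventually periodic.
-/

open Filter Finset MeasureTheory

/-- `qden a n` is the denominator `q_n` of the continued fraction with partial
quotients `a_1 = a 0, a_2 = a 1, …` (0-indexed sequence `a`), defined by
`q_0 = 1`, `q_1 = a_1`, `q_n = a_n q_{n-1} + q_{n-2}`. -/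
def qden (a : ℕ → ℕ+) : ℕ → ℕ
  | 0 => 1
  | 1 => a 0
  | (n+2) => (a (n+1) : ℕ) * qden a (n+1) + qden a n

/-- `pnum a n` is the numerator `p_n`, defined by `p_0 = 0`, `p_1 = 1`,
`p_n = a_n p_{n-1} + p_{n-2}`. -/
def pnum (a : ℕ → ℕ+) : ℕ → ℕ
  | 0 => 0
  | 1 => 1
  | (n+2) => (a (n+1) : ℕ) * pnum a (n+1) + pnum a n

/-- The value `[a_1, a_2, …]` of the infinite continued fraction with partial quotients
`a_1 = a 0, a_2 = a 1, …`, i.e. the limit of the convergents `p_n / q_n` (which always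
exists). -/
noncomputable def cfVal (a : ℕ → ℕ+) : ℝ :=
  limUnder atTop (fun n => (pnum a n : ℝ) / (qden a n : ℝ))

/-- The set `I` of irrational numbers of `[0,1]`. -/
def Iirr : Set ℝ := {x | x ∈ Set.Icc (0:ℝ) 1 ∧ Irrational x}

/-- The (unique) sequence of partial quotients of `x`, when `x` has a continued
fraction expansion. -/
noncomputable def coeff (x : ℝ) : ℕ → ℕ+ := by
  classical
  exact if h : ∃ a : ℕ → ℕ+, cfVal a = x then h.choose else fun _ => 1

/-- First component of Cantor's bijection: `f₁([a_1,a_2,…]) = [a_1,a_3,a_5,…]`. -/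
noncomputable def cantorF1 (x : ℝ) : ℝ := cfVal (fun j => coeff x (2*j))

/-- Second component of Cantor's bijection: `f₂([a_1,a_2,…]) = [a_2,a_4,a_6,…]`. -/
noncomputable def cantorF2 (x : ℝ) : ℝ := cfVal (fun j => coeff x (2*j+1))

/-- The set `Q` of quadratic irrational numbers of `[0,1]`. -/
def QuadIrr : Set ℝ :=
  {x | x ∈ Set.Icc (0:ℝ) 1 ∧ Irrational x ∧
    ∃ p : Polynomial ℚ, p.degree = 2 ∧ Polynomial.aeval x p = 0}

open scoped Topology

def shift {α : Type*} (a : ℕ → α) (n : ℕ) : ℕ → α := fun k => a (n + k)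

lemma shift_shift {α : Type*} (a : ℕ → α) (m n : ℕ) : shift (shift a m) n = shift a (m + n) := by
  funext k; simp only [shift, Nat.add_assoc]

@[simp] lemma shift_zero {α : Type*} (a : ℕ → α) : shift a 0 = a := by
  funext k; simp [shift]

section Recurrences

variable (a : ℕ → ℕ+)

lemma qden_pos (n : ℕ) : 0 < qden a n := by
  induction n using Nat.twoStepInduction with
  | zero => simp [qden]
  | one => simp [qden]
  | more n _ ih => simp only [qden]; positivity

lemma qden_le_qden_succ (n : ℕ) : qden a n ≤ qden a (n + 1) := by
  cases n with
  | zero => simp only [qden]; exact (a 0).pos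
  | succ n =>
    simp only [qden]
    nlinarith [(a (n + 1)).pos]

lemma qden_mono : Monotone (qden a) := monotone_nat_of_le_succ (qden_le_qden_succ a)

lemma le_qden (n : ℕ) : n ≤ qden a n := by
  induction n using Nat.twoStepInduction with
  | zero => simp [qden]
  | one => simp only [qden]; exact (a 0).pos
  | more n _ ih =>
    have := Nat.le_mul_of_pos_left (qden a (n + 1)) (a (n + 1)).pos
    simp only [qden]; linarith [qden_pos a n]

lemma pnum_le_qden (n : ℕ) : pnum a n ≤ qden a n := by
  induction n using Nat.twoStepInduction with
  | zero => simp [pnum, qden]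
  | one => simp only [pnum, qden]; exact (a 0).pos
  | more n ih₀ ih₁ => simp only [pnum, qden]; gcongr

lemma pnum_succ_mul_qden_sub (n : ℕ) :
    (pnum a (n + 1) * qden a n - pnum a n * qden a (n + 1) : ℤ) = (-1) ^ n := by
  induction n with
  | zero => simp [pnum, qden]
  | succ n ih =>
    simp only [pnum, qden, Nat.cast_add, Nat.cast_mul, pow_succ]
    linear_combination -ih

lemma pnum_succ_eq_qden_shift (n : ℕ) : pnum a (n + 1) = qden (shift a 1) n := by
  induction n using Nat.twoStepInduction with
  | zero => simp [pnum, qden]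
  | one => simp [pnum, qden, shift]
  | more n ih₀ ih₁ =>
    rw [pnum, qden, ← ih₀, ← ih₁]
    simp [shift, Nat.add_comm 1]

lemma qden_succ_eq_shift (n : ℕ) :
    qden a (n + 1) = a 0 * qden (shift a 1) n + pnum (shift a 1) n := by
  induction n using Nat.twoStepInduction with
  | zero => simp [pnum, qden]
  | one => simp [pnum, qden, shift]; ring
  | more n ih₀ ih₁ =>
    change a (n + 2) * qden a (n + 2) + qden a (n + 1) = _
    rw [ih₀, ih₁]
    simp only [qden, pnum, shift, Nat.add_comm 1]
    ring

end Recurrences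

section Convergents

variable (a : ℕ → ℕ+)

noncomputable def convergent (n : ℕ) : ℝ := pnum a n / qden a n

lemma convergent_mem_Icc (n : ℕ) : convergent a n ∈ Set.Icc 0 1 :=
  ⟨by unfold convergent; positivity,
    div_le_one_of_le₀ (by exact_mod_cast pnum_le_qden a n) (by positivity)⟩

lemma convergent_succ_sub (n : ℕ) :
    convergent a (n + 1) - convergent a n = (-1) ^ n * ((qden a n : ℝ) * qden a (n + 1))⁻¹ := by
  have h₀ : (qden a n : ℝ) ≠ 0 := by exact_mod_cast (qden_pos a n).ne'
  have h₁ : (qden a (n + 1) : ℝ) ≠ 0 := by exact_mod_cast (qden_pos a (n + 1)).ne'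
  have hdet : (pnum a (n + 1) * qden a n - pnum a n * qden a (n + 1) : ℝ) = (-1) ^ n := by
    exact_mod_cast pnum_succ_mul_qden_sub a n
  rw [convergent, convergent]
  field_simp
  linear_combination hdet

lemma convergent_eq_sum (n : ℕ) :
    convergent a n = ∑ i ∈ range n, (-1) ^ i * ((qden a i : ℝ) * qden a (i + 1))⁻¹ := by
  induction n with
  | zero => simp [convergent, pnum]
  | succ n ih => rw [sum_range_succ, ← ih, ← convergent_succ_sub]; ring

lemma tendsto_inv_qden_mul_qden_succ :
    Tendsto (fun n => ((qden a n : ℝ) * qden a (n + 1))⁻¹) atTop (𝓝 0) := by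
  refine squeeze_zero (fun n => by positivity) (fun n => ?_)
    tendsto_one_div_add_atTop_nhds_zero_nat
  have h₀ : (1 : ℝ) ≤ qden a n := by exact_mod_cast qden_pos a n
  have h₁ : (n + 1 : ℝ) ≤ qden a (n + 1) := by exact_mod_cast le_qden a (n + 1)
  rw [one_div]
  gcongr
  nlinarith

lemma tendsto_convergent : Tendsto (convergent a) atTop (𝓝 (cfVal a)) := by
  have hanti : Antitone fun n => ((qden a n : ℝ) * qden a (n + 1))⁻¹ := fun m n hmn => by
    have := qden_pos a m
    have := qden_pos a (m + 1)
    dsimp only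
    gcongr <;> exact_mod_cast qden_mono a (by omega)
  obtain ⟨l, hl⟩ := hanti.tendsto_alternating_series_of_tendsto_zero
    (tendsto_inv_qden_mul_qden_succ a)
  simp only [← convergent_eq_sum] at hl
  exact tendsto_nhds_limUnder ⟨l, hl⟩

lemma cfVal_mem_Icc : cfVal a ∈ Set.Icc 0 1 :=
  isClosed_Icc.mem_of_tendsto (tendsto_convergent a) (.of_forall (convergent_mem_Icc a))

end Convergents

section Head

variable (a : ℕ → ℕ+)

lemma convergent_succ (n : ℕ) : convergent a (n + 1) = (a 0 + convergent (shift a 1) n)⁻¹ := by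
  have := qden_pos (shift a 1) n
  rw [convergent, convergent, pnum_succ_eq_qden_shift, qden_succ_eq_shift]
  push_cast
  field_simp

lemma cfVal_eq_inv : cfVal a = (a 0 + cfVal (shift a 1))⁻¹ := by
  have hne : (a 0 : ℝ) + cfVal (shift a 1) ≠ 0 := by
    have : (1 : ℝ) ≤ a 0 := by exact_mod_cast (a 0).pos
    linarith [(cfVal_mem_Icc (shift a 1)).1]
  refine tendsto_nhds_unique ((tendsto_convergent a).comp (tendsto_add_atTop_nat 1)) ?_
  simp only [Function.comp_def, convergent_succ]
  exact (tendsto_const_nhds.add (tendsto_convergent _)).inv₀ hne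

lemma cfVal_pos : 0 < cfVal a := by
  rw [cfVal_eq_inv]
  have : (1 : ℝ) ≤ a 0 := by exact_mod_cast (a 0).pos
  have := (cfVal_mem_Icc (shift a 1)).1
  positivity

lemma cfVal_lt_one : cfVal a < 1 := by
  rw [cfVal_eq_inv]
  have : (1 : ℝ) ≤ a 0 := by exact_mod_cast (a 0).pos
  exact inv_lt_one_of_one_lt₀ (by linarith [cfVal_pos (shift a 1)])

lemma floor_inv_cfVal : ⌊(cfVal a)⁻¹⌋ = (a 0 : ℕ) := by
  rw [cfVal_eq_inv, inv_inv, Int.floor_eq_iff]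
  push_cast
  constructor <;> linarith [cfVal_pos (shift a 1), cfVal_lt_one (shift a 1)]

lemma fract_inv_cfVal : Int.fract (cfVal a)⁻¹ = cfVal (shift a 1) := by
  rw [Int.fract, floor_inv_cfVal, cfVal_eq_inv a, inv_inv]
  push_cast
  ring

end Head

noncomputable def gaussMap (x : ℝ) : ℝ := Int.fract x⁻¹

lemma cfVal_shift_eq_iterate (a : ℕ → ℕ+) (n : ℕ) :
    cfVal (shift a n) = gaussMap^[n] (cfVal a) := by
  induction n with
  | zero => simp
  | succ n ih => rw [Function.iterate_succ_apply', ← ih, gaussMap, fract_inv_cfVal, shift_shift]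

lemma cfVal_injective : Function.Injective cfVal := by
  intro a b h
  have key (c : ℕ → ℕ+) (n : ℕ) : ((c n : ℕ) : ℤ) = ⌊(gaussMap^[n] (cfVal c))⁻¹⌋ := by
    rw [← cfVal_shift_eq_iterate, floor_inv_cfVal]
    simp [shift]
  funext n
  exact PNat.coe_injective (Nat.cast_injective (R := ℤ) ((key a n).trans (h ▸ (key b n).symm)))

lemma coeff_cfVal (a : ℕ → ℕ+) : coeff (cfVal a) = a := by
  have h : ∃ b : ℕ → ℕ+, cfVal b = cfVal a := ⟨a, rfl⟩
  rw [coeff, dif_pos h]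
  exact cfVal_injective h.choose_spec

lemma cfVal_irrational (a : ℕ → ℕ+) : Irrational (cfVal a) := by
  suffices ∀ n (a : ℕ → ℕ+) (q : ℚ), q.den = n → (q : ℝ) ≠ cfVal a from
    fun ⟨q, hq⟩ => this _ a q rfl hq
  intro n
  induction n using Nat.strong_induction_on with
  | _ n ih =>
  rintro a q rfl hq
  have hq0 : 0 < q := by exact_mod_cast hq ▸ cfVal_pos a
  have hq1 : q < 1 := by exact_mod_cast hq ▸ cfVal_lt_one a
  -- the tail `1/q - a 0` has denominator `q.num < q.den`
  refine ih _ ?_ (shift a 1) (q⁻¹ - (a 0 : ℕ)) rfl ?_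
  · rw [← Int.cast_natCast, Rat.sub_intCast_den, Rat.den_inv_of_ne_zero hq0.ne']
    have := Rat.num_lt_denom_iff.2 hq1
    have := Rat.num_pos.2 hq0
    omega
  · rw [← fract_inv_cfVal, Int.fract, floor_inv_cfVal, ← hq]
    push_cast
    ring

section Tails

variable {a : ℕ → ℕ+} {t : ℕ → ℝ}

/-- If `t n = [a n, a (n+1), …]`, then `t 0 = (p_{n+1} + t_{n+1} p_n) / (q_{n+1} + t_{n+1} q_n)`. -/
lemma mul_qden_add_eq (ht : ∀ n, t n * (a n + t (n + 1)) = 1) (n : ℕ) :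
    t 0 * (qden a (n + 1) + t (n + 1) * qden a n) = pnum a (n + 1) + t (n + 1) * pnum a n := by
  induction n with
  | zero => simpa [pnum, qden] using ht 0
  | succ n ih =>
    simp only [pnum, qden, Nat.cast_add, Nat.cast_mul]
    linear_combination (a (n + 1) + t (n + 2)) * ih
      + (pnum a n - t 0 * qden a n) * ht (n + 1)

lemma abs_sub_convergent_le (ht_pos : ∀ n, 0 < t n) (ht : ∀ n, t n * (a n + t (n + 1)) = 1)
    (n : ℕ) : |t 0 - convergent a n| ≤ ((qden a n : ℝ) * qden a (n + 1))⁻¹ := by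
  have h₀ : (0 : ℝ) < qden a n := by exact_mod_cast qden_pos a n
  have h₁ : (0 : ℝ) < qden a (n + 1) := by exact_mod_cast qden_pos a (n + 1)
  have hs := ht_pos (n + 1)
  have hdet : (pnum a (n + 1) * qden a n - pnum a n * qden a (n + 1) : ℝ) = (-1) ^ n := by
    exact_mod_cast pnum_succ_mul_qden_sub a n
  have key : (t 0 - convergent a n) * (qden a n * (qden a (n + 1) + t (n + 1) * qden a n))
      = (-1) ^ n := by
    rw [convergent]
    field_simp
    linear_combination qden a n * mul_qden_add_eq ht n + hdet
  have hD : 0 < (qden a n : ℝ) * (qden a (n + 1) + t (n + 1) * qden a n) := by positivity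
  replace key := congrArg abs key
  rw [abs_mul, abs_of_pos hD, abs_neg_one_pow] at key
  rw [← one_div, le_div_iff₀ (by positivity), ← key]
  gcongr
  nlinarith

lemma cfVal_eq_of_mul_add_eq_one (ht_pos : ∀ n, 0 < t n)
    (ht : ∀ n, t n * (a n + t (n + 1)) = 1) : cfVal a = t 0 := by
  refine tendsto_nhds_unique (tendsto_convergent a) (tendsto_iff_norm_sub_tendsto_zero.2 ?_)
  refine squeeze_zero_norm (fun n => ?_) (tendsto_inv_qden_mul_qden_succ a)
  rw [norm_norm, Real.norm_eq_abs, abs_sub_comm]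
  exact abs_sub_convergent_le ht_pos ht n

end Tails

section CfValTails

variable (a : ℕ → ℕ+)

lemma cfVal_shift_mul (n : ℕ) : cfVal (shift a n) * (a n + cfVal (shift a (n + 1))) = 1 := by
  have hpos : 0 < (a n : ℝ) + cfVal (shift a (n + 1)) := by
    have := cfVal_pos (shift a (n + 1)); positivity
  rw [cfVal_eq_inv, shift_shift]
  exact inv_mul_cancel₀ hpos.ne'

lemma cfVal_mul_qden_add_eq (n : ℕ) :
    cfVal a * (qden a (n + 1) + cfVal (shift a (n + 1)) * qden a n)
      = pnum a (n + 1) + cfVal (shift a (n + 1)) * pnum a n := by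
  simpa using mul_qden_add_eq (t := fun k => cfVal (shift a k)) (cfVal_shift_mul a) n

lemma abs_cfVal_sub_convergent_le (n : ℕ) :
    |cfVal a - convergent a n| ≤ ((qden a n : ℝ) * qden a (n + 1))⁻¹ := by
  simpa using abs_sub_convergent_le (t := fun k => cfVal (shift a k))
    (fun k => cfVal_pos _) (cfVal_shift_mul a) n

end CfValTails

lemma gaussMap_mem {x : ℝ} (hx : Irrational x) :
    Irrational (gaussMap x) ∧ gaussMap x ∈ Set.Ioo 0 1 := by
  have hirr : Irrational (gaussMap x) := by
    rw [gaussMap, Int.fract]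
    exact hx.inv.sub_intCast _
  refine ⟨hirr, (Int.fract_nonneg _).lt_of_ne ?_, Int.fract_lt_one _⟩
  exact fun h0 => hirr ⟨0, by rw [gaussMap, ← h0]; simp⟩

lemma exists_cfVal_eq {x : ℝ} (hx : Irrational x) (h : x ∈ Set.Ioo 0 1) : ∃ a, cfVal a = x := by
  set t : ℕ → ℝ := fun n => gaussMap^[n] x
  have ht : ∀ n, Irrational (t n) ∧ t n ∈ Set.Ioo 0 1 := by
    intro n
    induction n with
    | zero => exact ⟨hx, h⟩
    | succ n ih =>
      simp only [t, Function.iterate_succ_apply']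
      exact gaussMap_mem ih.1
  have hfloor (n : ℕ) : 0 < ⌊(t n)⁻¹⌋ :=
    Int.floor_pos.2 ((one_le_inv₀ (ht n).2.1).2 (ht n).2.2.le)
  refine ⟨fun n => ⟨⌊(t n)⁻¹⌋.toNat, by simpa using hfloor n⟩,
    cfVal_eq_of_mul_add_eq_one (fun n => (ht n).2.1) (fun n => ?_)⟩
  have hcast : ((⌊(t n)⁻¹⌋.toNat : ℕ) : ℝ) = ⌊(t n)⁻¹⌋ := by
    exact_mod_cast Int.toNat_of_nonneg (hfloor n).le
  simp only [PNat.mk_coe, hcast, t, Function.iterate_succ_apply', gaussMap, Int.floor_add_fract]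
  exact mul_inv_cancel₀ (ht n).2.1.ne'

section Quadratic

def evalQuad (v : ℤ × ℤ × ℤ) (x : ℝ) : ℝ := v.1 * x ^ 2 + v.2.1 * x + v.2.2

/-- Only `v ≠ 0` is required, so rationals qualify too. -/
def IsQuadraticRoot (x : ℝ) : Prop := ∃ v : ℤ × ℤ × ℤ, v ≠ 0 ∧ evalQuad v x = 0

/-- The coefficients of `A (α t + β)² + B (α t + β)(γ t + δ) + C (γ t + δ)²` as a quadratic
polynomial in `t`, for `v = (A, B, C)`. -/
def mobiusSubst (v : ℤ × ℤ × ℤ) (α β γ δ : ℤ) : ℤ × ℤ × ℤ :=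
  (v.1 * α ^ 2 + v.2.1 * α * γ + v.2.2 * γ ^ 2,
    2 * v.1 * α * β + v.2.1 * (α * δ + β * γ) + 2 * v.2.2 * γ * δ,
    v.1 * β ^ 2 + v.2.1 * β * δ + v.2.2 * δ ^ 2)

variable {v : ℤ × ℤ × ℤ} {α β γ δ : ℤ} {x t : ℝ}

lemma evalQuad_mobiusSubst (h : x * (γ * t + δ) = α * t + β) :
    evalQuad (mobiusSubst v α β γ δ) t = (γ * t + δ) ^ 2 * evalQuad v x := by
  simp only [evalQuad, mobiusSubst]
  push_cast
  linear_combination (-(v.1 : ℝ) * (x * (γ * t + δ) + (α * t + β)) - v.2.1 * (γ * t + δ)) * h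

lemma mobiusSubst_ne_zero (hv : v ≠ 0) (hdet : α * δ - β * γ ≠ 0) :
    mobiusSubst v α β γ δ ≠ 0 := by
  obtain ⟨A, B, C⟩ := v
  intro h
  simp only [mobiusSubst, Prod.mk_eq_zero] at h
  obtain ⟨h₁, h₂, h₃⟩ := h
  -- substituting back with the inverse matrix multiplies `(A, B, C)` by the squared determinant
  have hA : A * (α * δ - β * γ) ^ 2 = 0 := by
    linear_combination δ ^ 2 * h₁ - γ * δ * h₂ + γ ^ 2 * h₃
  have hB : B * (α * δ - β * γ) ^ 2 = 0 := by
    linear_combination -2 * β * δ * h₁ + (α * δ + β * γ) * h₂ - 2 * α * γ * h₃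
  have hC : C * (α * δ - β * γ) ^ 2 = 0 := by
    linear_combination β ^ 2 * h₁ - α * β * h₂ + α ^ 2 * h₃
  simp only [mul_eq_zero, pow_eq_zero_iff two_ne_zero, hdet, or_false] at hA hB hC
  simp_all

lemma discrim_mobiusSubst :
    discrim (mobiusSubst v α β γ δ).1 (mobiusSubst v α β γ δ).2.1 (mobiusSubst v α β γ δ).2.2
      = (α * δ - β * γ) ^ 2 * discrim v.1 v.2.1 v.2.2 := by
  simp only [discrim, mobiusSubst]
  ring

lemma fst_ne_zero_of_irrational (hv : v ≠ 0) (hx : evalQuad v x = 0) (hirr : Irrational x) :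
    v.1 ≠ 0 := by
  obtain ⟨A, B, C⟩ := v
  rintro (rfl : A = 0)
  simp only [evalQuad, Int.cast_zero, zero_mul, zero_add] at hx
  have hB : B = 0 := by
    by_contra hB
    exact hirr ⟨-C / B, by push_cast; field_simp; linarith⟩
  subst hB
  simp_all

lemma abs_evalQuad_le {c : ℝ} (hx : evalQuad v x = 0) (hx₁ : x ∈ Set.Icc 0 1)
    (hc : c ∈ Set.Icc 0 1) : |evalQuad v c| ≤ |c - x| * ((2 * |v.1| + |v.2.1| : ℤ) : ℝ) := by
  have key : evalQuad v c = (c - x) * (v.1 * (c + x) + v.2.1) := by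
    simp only [evalQuad] at hx ⊢
    linear_combination hx
  have hcx : |c + x| ≤ 2 := abs_le.2 ⟨by linarith [hc.1, hx₁.1], by linarith [hc.2, hx₁.2]⟩
  rw [key, abs_mul]
  gcongr
  push_cast
  calc |(v.1 : ℝ) * (c + x) + v.2.1| ≤ |(v.1 : ℝ)| * |c + x| + |(v.2.1 : ℝ)| :=
        (abs_add_le _ _).trans_eq (by rw [abs_mul])
    _ ≤ 2 * |(v.1 : ℝ)| + |(v.2.1 : ℝ)| := by nlinarith [abs_nonneg (v.1 : ℝ)]

lemma IsQuadraticRoot.of_mobius (ht : IsQuadraticRoot t) (h : x * (γ * t + δ) = α * t + β)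
    (hdet : α * δ - β * γ ≠ 0) : IsQuadraticRoot x := by
  obtain ⟨v, hv, hvt⟩ := ht
  refine ⟨mobiusSubst v δ (-β) (-γ) α, mobiusSubst_ne_zero hv (by convert hdet using 1; ring), ?_⟩
  rw [evalQuad_mobiusSubst (t := x) (x := t) (by push_cast; linear_combination -h), hvt, mul_zero]

lemma finite_setOf_evalQuad_eq_zero {S : Set (ℤ × ℤ × ℤ)} (hS : S.Finite) :
    {t : ℝ | ∃ v ∈ S, v.1 ≠ 0 ∧ evalQuad v t = 0}.Finite := by
  refine ((hS.sep fun v => v.1 ≠ 0).biUnion fun v hv => Polynomial.finite_setOfPred_isRoot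
    (p := .C (v.1 : ℝ) * .X ^ 2 + .C (v.2.1 : ℝ) * .X + .C (v.2.2 : ℝ)) ?_).subset ?_
  · exact Polynomial.ne_zero_of_coe_le_degree
      (Polynomial.degree_quadratic (by exact_mod_cast hv.2)).ge
  · rintro t ⟨v, hvS, hv, ht⟩
    exact Set.mem_biUnion ⟨hvS, hv⟩ (by simpa [evalQuad] using ht)

end Quadratic

lemma isQuadraticRoot_of_rat {A B C : ℚ} {x : ℝ} (hA : A ≠ 0)
    (h : A * x ^ 2 + B * x + C = 0) : IsQuadraticRoot x := by
  refine ⟨(A.num * B.den * C.den, B.num * A.den * C.den, C.num * A.den * B.den), ?_, ?_⟩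
  · simp [Prod.mk_eq_zero, hA, A.den_nz, B.den_nz, C.den_nz]
  · have hnum (q : ℚ) : (q.num : ℝ) = q * q.den := by
      rw [Rat.cast_def]; field_simp
    simp only [evalQuad]
    push_cast
    rw [hnum, hnum, hnum]
    linear_combination (A.den * B.den * C.den : ℝ) * h

lemma mem_quadIrr_iff {x : ℝ} :
    x ∈ QuadIrr ↔ x ∈ Set.Icc 0 1 ∧ Irrational x ∧ IsQuadraticRoot x := by
  refine and_congr_right fun _ => and_congr_right fun hirr => ⟨?_, ?_⟩
  · rintro ⟨p, hdeg, hp⟩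
    have hnd : p.natDegree = 2 := Polynomial.natDegree_eq_of_degree_eq_some hdeg
    rw [Polynomial.aeval_eq_sum_range, hnd] at hp
    simp only [sum_range_succ, sum_range_zero, Rat.smul_def] at hp
    exact isQuadraticRoot_of_rat (B := p.coeff 1) (C := p.coeff 0)
      (Polynomial.coeff_ne_zero_of_eq_degree hdeg) (by linear_combination hp)
  · rintro ⟨v, hv, hx⟩
    refine ⟨.C (v.1 : ℚ) * .X ^ 2 + .C (v.2.1 : ℚ) * .X + .C (v.2.2 : ℚ),
      Polynomial.degree_quadratic (by exact_mod_cast fst_ne_zero_of_irrational hv hx hirr), ?_⟩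
    simpa [evalQuad] using hx

section Periodic

variable {α : Type*}

def EventuallyPeriodic (a : ℕ → α) : Prop := ∃ N P, 0 < P ∧ ∀ m, N ≤ m → a (m + P) = a m

lemma eventuallyPeriodic_of_shift_eq {a : ℕ → α} {i j : ℕ} (hij : i < j)
    (h : shift a i = shift a j) : EventuallyPeriodic a := by
  refine ⟨i, j - i, by omega, fun m hm => ?_⟩
  have := congrFun h (m - i)
  simp only [shift] at this
  rw [show m + (j - i) = j + (m - i) by omega, ← this]
  congr 1
  omega

lemma apply_add_mul_of_periodic {a : ℕ → α} {N P : ℕ} (h : ∀ m, N ≤ m → a (m + P) = a m)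
    (k : ℕ) {m : ℕ} (hm : N ≤ m) : a (m + k * P) = a m := by
  induction k with
  | zero => simp
  | succ k ih => rw [add_mul, one_mul, ← add_assoc, h _ (by omega), ih]

lemma EventuallyPeriodic.comp_mul_add {a : ℕ → α} (ha : EventuallyPeriodic a) {k : ℕ}
    (hk : 0 < k) (r : ℕ) : EventuallyPeriodic fun j => a (k * j + r) := by
  obtain ⟨N, P, hP, h⟩ := ha
  refine ⟨N, P, hP, fun j hj => ?_⟩
  dsimp only
  rw [mul_add, add_right_comm]
  exact apply_add_mul_of_periodic h k (by nlinarith)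

def interleave (b c : ℕ → α) (n : ℕ) : α := if Even n then b (n / 2) else c (n / 2)

@[simp] lemma interleave_two_mul (b c : ℕ → α) (j : ℕ) : interleave b c (2 * j) = b j := by
  simp [interleave]

@[simp] lemma interleave_two_mul_add_one (b c : ℕ → α) (j : ℕ) :
    interleave b c (2 * j + 1) = c j := by
  simp only [interleave, Nat.not_even_two_mul_add_one, if_false]
  congr 1
  omega

lemma interleave_even_odd (a : ℕ → α) :
    interleave (fun j => a (2 * j)) (fun j => a (2 * j + 1)) = a := by
  funext n
  obtain ⟨j, rfl | rfl⟩ := Nat.even_or_odd' n <;> simp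

lemma EventuallyPeriodic.interleave {b c : ℕ → α} (hb : EventuallyPeriodic b)
    (hc : EventuallyPeriodic c) : EventuallyPeriodic (interleave b c) := by
  obtain ⟨N, P, hP, hbP⟩ := hb
  obtain ⟨M, Q, hQ, hcQ⟩ := hc
  refine ⟨2 * (N + M), 2 * (P * Q), by positivity, fun m hm => ?_⟩
  obtain ⟨j, rfl | rfl⟩ := Nat.even_or_odd' m
  · rw [← mul_add, interleave_two_mul, interleave_two_mul, mul_comm P Q]
    exact apply_add_mul_of_periodic hbP Q (by omega)
  · rw [add_right_comm, ← mul_add, interleave_two_mul_add_one, interleave_two_mul_add_one]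
    exact apply_add_mul_of_periodic hcQ P (by omega)

end Periodic

section Lagrange

variable (a : ℕ → ℕ+) (v : ℤ × ℤ × ℤ)

lemma pnum_mul_qden_succ_sub_ne_zero (n : ℕ) :
    (pnum a n * qden a (n + 1) - pnum a (n + 1) * qden a n : ℤ) ≠ 0 := by
  rw [← neg_sub, pnum_succ_mul_qden_sub]
  simp

/-- If `v` is an equation for `[a 0, a 1, …]`, then `tailQuad a v n` is one for
`[a (n+1), a (n+2), …]`. -/
def tailQuad (n : ℕ) : ℤ × ℤ × ℤ :=
  mobiusSubst v (pnum a n) (pnum a (n + 1)) (qden a n) (qden a (n + 1))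

variable {a v}

lemma evalQuad_tailQuad (hv : evalQuad v (cfVal a) = 0) (n : ℕ) :
    evalQuad (tailQuad a v n) (cfVal (shift a (n + 1))) = 0 := by
  rw [tailQuad, evalQuad_mobiusSubst (x := cfVal a), hv, mul_zero]
  push_cast
  linear_combination cfVal_mul_qden_add_eq a n

lemma tailQuad_fst_eq (n : ℕ) :
    ((tailQuad a v n).1 : ℝ) = qden a n ^ 2 * evalQuad v (convergent a n) := by
  have : (qden a n : ℝ) ≠ 0 := by exact_mod_cast (qden_pos a n).ne'
  simp only [tailQuad, mobiusSubst, evalQuad, convergent]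
  push_cast
  field_simp

lemma abs_tailQuad_fst_le (hv : evalQuad v (cfVal a) = 0) (n : ℕ) :
    |(tailQuad a v n).1| ≤ 2 * |v.1| + |v.2.1| := by
  have hq : (0 : ℝ) < qden a n := by exact_mod_cast qden_pos a n
  have hq' : (qden a n : ℝ) ≤ qden a (n + 1) := by exact_mod_cast qden_le_qden_succ a n
  have hK : (0 : ℝ) ≤ ((2 * |v.1| + |v.2.1| : ℤ) : ℝ) := by positivity
  suffices |((tailQuad a v n).1 : ℝ)| ≤ ((2 * |v.1| + |v.2.1| : ℤ) : ℝ) by exact_mod_cast this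
  calc |((tailQuad a v n).1 : ℝ)| = qden a n ^ 2 * |evalQuad v (convergent a n)| := by
        rw [tailQuad_fst_eq, abs_mul, abs_of_pos (by positivity)]
    _ ≤ qden a n ^ 2 * (((qden a n : ℝ) * qden a (n + 1))⁻¹ * ((2 * |v.1| + |v.2.1| : ℤ) : ℝ)) := by
        gcongr
        refine (abs_evalQuad_le hv (cfVal_mem_Icc a) (convergent_mem_Icc a n)).trans ?_
        gcongr
        rw [abs_sub_comm]
        exact abs_cfVal_sub_convergent_le a n
    _ ≤ ((2 * |v.1| + |v.2.1| : ℤ) : ℝ) := by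
        rw [← mul_assoc, ← div_eq_mul_inv, sq]
        refine mul_le_of_le_one_left hK ((div_le_one (mul_pos hq (hq.trans_le hq'))).2 ?_)
        gcongr

lemma abs_tailQuad_snd_le (hv : evalQuad v (cfVal a) = 0) (n : ℕ) :
    |(tailQuad a v n).2.1| ≤ |discrim v.1 v.2.1 v.2.2| + 4 * (2 * |v.1| + |v.2.1|) ^ 2 := by
  have hdisc := discrim_mobiusSubst (v := v) (α := pnum a n) (β := pnum a (n + 1))
    (γ := qden a n) (δ := qden a (n + 1))
  have hdet : ((pnum a n * qden a (n + 1) - pnum a (n + 1) * qden a n : ℤ)) ^ 2 = 1 := by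
    rw [← neg_sub, pnum_succ_mul_qden_sub, neg_sq, ← pow_mul, mul_comm, pow_mul]
    norm_num
  rw [hdet, one_mul, discrim] at hdisc
  have hG := abs_tailQuad_fst_le hv n
  have hG' := abs_tailQuad_fst_le hv (n + 1)
  have hprod : (tailQuad a v n).1 * (tailQuad a v (n + 1)).1 ≤ (2 * |v.1| + |v.2.1|) ^ 2 := by
    calc _ ≤ |(tailQuad a v n).1| * |(tailQuad a v (n + 1)).1| :=
          (le_abs_self _).trans_eq (abs_mul _ _)
      _ ≤ (2 * |v.1| + |v.2.1|) * (2 * |v.1| + |v.2.1|) :=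
          mul_le_mul hG hG' (abs_nonneg _) (by positivity)
      _ = _ := (sq _).symm
  have hsq : |(tailQuad a v n).2.1| ≤ (tailQuad a v n).2.1 ^ 2 :=
    Int.abs_eq_natAbs _ ▸ Int.natAbs_le_self_sq _
  -- the last coefficient of `tailQuad a v n` is the first one of `tailQuad a v (n + 1)`
  change (tailQuad a v n).2.1 ^ 2 - 4 * (tailQuad a v n).1 * (tailQuad a v (n + 1)).1 = _ at hdisc
  linarith [le_abs_self (discrim v.1 v.2.1 v.2.2)]

end Lagrange

theorem eventuallyPeriodic_of_isQuadraticRoot_cfVal {a : ℕ → ℕ+}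
    (h : IsQuadraticRoot (cfVal a)) : EventuallyPeriodic a := by
  obtain ⟨v, hv0, hv⟩ := h
  set K := 2 * |v.1| + |v.2.1|
  set M := |discrim v.1 v.2.1 v.2.2| + 4 * K ^ 2
  have hbox (n : ℕ) : tailQuad a v n ∈ Set.Icc (-K, -M, -K) (K, M, K) := by
    have hG := abs_le.1 (abs_tailQuad_fst_le hv n)
    have hH := abs_le.1 (abs_tailQuad_snd_le hv n)
    have hG' := abs_le.1 (abs_tailQuad_fst_le hv (n + 1))
    exact ⟨⟨hG.1, hH.1, hG'.1⟩, ⟨hG.2, hH.2, hG'.2⟩⟩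
  -- all tails are roots of the finitely many quadratics in the box, so two of them coincide
  have hroot (n : ℕ) : cfVal (shift a (n + 1)) ∈
      {t | ∃ w ∈ Set.Icc (-K, -M, -K) (K, M, K), w.1 ≠ 0 ∧ evalQuad w t = 0} :=
    ⟨tailQuad a v n, hbox n,
      fst_ne_zero_of_irrational (mobiusSubst_ne_zero hv0 (pnum_mul_qden_succ_sub_ne_zero a n))
        (evalQuad_tailQuad hv n) (cfVal_irrational _), evalQuad_tailQuad hv n⟩
  obtain ⟨i, j, hij, hcf⟩ := (finite_setOf_evalQuad_eq_zero (Set.finite_Icc _ _)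
    ).exists_lt_map_eq_of_forall_mem hroot
  exact eventuallyPeriodic_of_shift_eq (by omega : i + 1 < j + 1) (cfVal_injective hcf)

section Euler

variable (a : ℕ → ℕ+)

lemma isQuadraticRoot_cfVal_of_shift (n : ℕ) (h : IsQuadraticRoot (cfVal (shift a (n + 1)))) :
    IsQuadraticRoot (cfVal a) :=
  h.of_mobius (α := pnum a n) (β := pnum a (n + 1)) (γ := qden a n) (δ := qden a (n + 1))
    (by push_cast; linear_combination cfVal_mul_qden_add_eq a n)
    (pnum_mul_qden_succ_sub_ne_zero a n)

lemma isQuadraticRoot_cfVal_of_shift_eq_self {m : ℕ} (h : shift a (m + 1) = a) :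
    IsQuadraticRoot (cfVal a) := by
  have key := cfVal_mul_qden_add_eq a m
  rw [h] at key
  refine ⟨(qden a m, qden a (m + 1) - pnum a m, -pnum a (m + 1)), ?_, ?_⟩
  · simp [Prod.mk_eq_zero, (qden_pos a m).ne']
  · simp only [evalQuad]
    push_cast
    linear_combination key

theorem isQuadraticRoot_cfVal_of_eventuallyPeriodic {a : ℕ → ℕ+} (h : EventuallyPeriodic a) :
    IsQuadraticRoot (cfVal a) := by
  obtain ⟨N, P, hP, hper⟩ := h
  obtain ⟨m, rfl⟩ : ∃ m, P = m + 1 := ⟨P - 1, by omega⟩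
  refine isQuadraticRoot_cfVal_of_shift a N (isQuadraticRoot_cfVal_of_shift_eq_self _ (m := m) ?_)
  funext k
  simp only [shift]
  rw [show N + 1 + (m + 1 + k) = N + 1 + k + (m + 1) by ring, hper _ (by omega)]

end Euler

theorem quadIrr_eq_image : QuadIrr = cfVal '' {a | EventuallyPeriodic a} := by
  ext x
  rw [mem_quadIrr_iff]
  constructor
  · rintro ⟨hx, hirr, hq⟩
    obtain ⟨a, rfl⟩ := exists_cfVal_eq hirr
      ⟨hx.1.lt_of_ne hirr.ne_zero.symm, hx.2.lt_of_ne hirr.ne_one⟩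
    exact ⟨a, eventuallyPeriodic_of_isQuadraticRoot_cfVal hq, rfl⟩
  · rintro ⟨a, ha, rfl⟩
    exact ⟨cfVal_mem_Icc a, cfVal_irrational a, isQuadraticRoot_cfVal_of_eventuallyPeriodic ha⟩

lemma cantorF1_cfVal (a : ℕ → ℕ+) : cantorF1 (cfVal a) = cfVal fun j => a (2 * j) := by
  rw [cantorF1, coeff_cfVal]

lemma cantorF2_cfVal (a : ℕ → ℕ+) : cantorF2 (cfVal a) = cfVal fun j => a (2 * j + 1) := by
  rw [cantorF2, coeff_cfVal]

/-- Cantor's bijection `f = (f₁,f₂)` maps the set `Q` of quadratic irrationals of `[0,1]`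
bijectively onto `Q × Q`. -/
theorem cantor_bijection_bijOn_quadratic :
    Set.BijOn (fun x => (cantorF1 x, cantorF2 x)) QuadIrr (QuadIrr ×ˢ QuadIrr) := by
  rw [quadIrr_eq_image]
  refine ⟨?_, ?_, ?_⟩
  · rintro _ ⟨a, ha, rfl⟩
    simp only [cantorF1_cfVal, cantorF2_cfVal]
    exact ⟨⟨_, ha.comp_mul_add two_pos 0, rfl⟩, ⟨_, ha.comp_mul_add two_pos 1, rfl⟩⟩
  · rintro _ ⟨a, -, rfl⟩ _ ⟨b, -, rfl⟩ h
    simp only [cantorF1_cfVal, cantorF2_cfVal, Prod.mk.injEq] at h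
    rw [← interleave_even_odd a, ← interleave_even_odd b, cfVal_injective h.1,
      cfVal_injective h.2]
  · rintro ⟨_, _⟩ ⟨⟨b, hb, rfl⟩, ⟨c, hc, rfl⟩⟩
    refine ⟨cfVal (interleave b c), ⟨_, hb.interleave hc, rfl⟩, ?_⟩
    simp only [cantorF1_cfVal, cantorF2_cfVal, interleave_two_mul, interleave_two_mul_add_one]
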